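/- Let φ : ℝ/ℤ → ℝ/ℤ preserve the circular order, i.e. sbtw x y z implies sbtw (φ x) (φ y) (φ z) for all x, y, z. Let k ≥ 0 and let a : Fin (2k+1) → ℝ/ℤ be injective with φ ∘ a also injective. Then sgn(φ ∘ a) = sgn(a). -/

import Mathlib

noncomputable section
open Classical

instance : Fact ((0:ℝ) < 1) := ⟨one_pos⟩

/-- The circle `ℝ/ℤ`. -/
abbrev S1 := AddCircle (1 : ℝ)

/-- A tuple of points on the circle is in cyclic order if every increasing triple of
indices gives points in strict circular betweenness. -/
def InCyclicOrder {m : ℕ} (b : Fin m → S1) : Prop :=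
  ∀ i j l : Fin m, i < j → j < l → sbtw (b i) (b j) (b l)

/-- The cyclic sign of a tuple of points on the circle: the sign of any permutation
rearranging the tuple into cyclic order (well defined for injective tuples of odd
length). -/
noncomputable def cycSgn {m : ℕ} (a : Fin m → S1) : ℤ :=
  if h : ∃ σ : Equiv.Perm (Fin m), InCyclicOrder (a ∘ σ) then
    (Equiv.Perm.sign h.choose : ℤ)
  else 1

/-! Any two rearrangements of a tuple into cyclic order differ by a rotation of the indices, and a
rotation of `Fin (2k+1)` is an even permutation; so `cycSgn b` is the sign of any rearrangement
into cyclic order. Since `φ` preserves `sbtw`, a rearrangement putting `a` into cyclic order also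
puts `φ ∘ a` into cyclic order. -/

open Equiv Equiv.Perm

theorem AddCircle.sbtw_coe_of_lt {p : ℝ} [Fact (0 < p)] {x y z : ℝ} (hx : 0 ≤ x) (hxy : x < y)
    (hyz : y < z) (hz : z < p) : sbtw (x : AddCircle p) y z := by
  have hp : 0 < p := Fact.out
  refine sbtw_of_btw_not_btw ?_ ?_ <;> rw [QuotientAddGroup.btw_coe_iff]
  · rw [(toIcoMod_eq_self hp).2 ⟨hxy.le, by linarith⟩,
      (toIocMod_eq_self hp).2 ⟨hxy.trans hyz, by linarith⟩]
    exact hyz.le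
  · have hy : toIcoMod hp z y = y + p :=
      (toIcoMod_eq_iff hp).2 ⟨⟨by linarith, by linarith⟩, ⟨-1, by simp⟩⟩
    have hx : toIocMod hp z x = x + p :=
      (toIocMod_eq_iff hp).2 ⟨⟨by linarith, by linarith⟩, ⟨-1, by simp⟩⟩
    rw [hy, hx]
    linarith

theorem exists_inCyclicOrder_comp_perm {m : ℕ} {b : Fin m → S1} (hb : Function.Injective b) :
    ∃ σ : Perm (Fin m), InCyclicOrder (b ∘ σ) := by
  set f : Fin m → ℝ := fun i => AddCircle.equivIco 1 0 (b i)
  have hf_mem : ∀ i, f i ∈ Set.Ico (0 : ℝ) 1 := by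
    simpa using fun i => (AddCircle.equivIco 1 0 (b i)).2
  have hf_coe : ∀ i, (f i : S1) = b i := fun i => (AddCircle.equivIco 1 0).symm_apply_apply (b i)
  have hf_inj : Function.Injective f := fun i j h => hb (by rw [← hf_coe i, ← hf_coe j, h])
  have hmono : StrictMono (f ∘ Tuple.sort f) :=
    (Tuple.monotone_sort f).strictMono_of_injective (hf_inj.comp (Equiv.injective _))
  refine ⟨Tuple.sort f, fun i j l hij hjl => ?_⟩
  simp only [Function.comp_apply, ← hf_coe]
  exact AddCircle.sbtw_coe_of_lt (hf_mem _).1 (hmono hij) (hmono hjl) (hf_mem _).2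

theorem inCyclicOrder_iff_sbtw {m : ℕ} {c : Fin m → S1} :
    InCyclicOrder c ↔ ∀ i j l : Fin m, sbtw i j l → sbtw (c i) (c j) (c l) := by
  refine ⟨fun hc i j l h => ?_,
    fun h i j l hij hjl => h i j l (Fin.sbtw_iff.2 (.inl ⟨hij, hjl⟩))⟩
  rcases Fin.sbtw_iff.1 h with ⟨h₁, h₂⟩ | ⟨h₁, h₂⟩ | ⟨h₁, h₂⟩
  · exact hc _ _ _ h₁ h₂
  · exact sbtw_cyclic_right (hc _ _ _ h₁ h₂)
  · exact sbtw_cyclic_left (hc _ _ _ h₁ h₂)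

theorem sbtw_finRotate {n : ℕ} {i j l : Fin (n + 1)} (h : sbtw i j l) :
    sbtw (finRotate (n + 1) i) (finRotate (n + 1) j) (finRotate (n + 1) l) := by
  simp only [Fin.sbtw_iff, Fin.lt_def, coe_finRotate, Fin.ext_iff, Fin.val_last] at h ⊢
  split_ifs <;> omega

theorem InCyclicOrder.comp_finRotate_pow {n : ℕ} {c : Fin (n + 1) → S1} (hc : InCyclicOrder c)
    (s : ℕ) : InCyclicOrder (c ∘ ⇑(finRotate (n + 1) ^ s)) := by
  induction s with
  | zero => simpa using hc
  | succ s ih =>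
    rw [pow_succ, coe_mul, ← Function.comp_assoc]
    exact inCyclicOrder_iff_sbtw.2 fun i j l h =>
      inCyclicOrder_iff_sbtw.1 ih _ _ _ (sbtw_finRotate h)

theorem finRotate_pow_val_apply_zero {n : ℕ} (i : Fin (n + 1)) :
    (finRotate (n + 1) ^ (i : ℕ)) 0 = i := by
  induction i using Fin.induction with
  | zero => rfl
  | succ i ih =>
    rw [Fin.val_castSucc] at ih
    rw [Fin.val_succ, pow_succ', mul_apply, ih, finRotate_apply, Fin.coeSucc_eq_succ]

theorem eq_one_of_inCyclicOrder_comp {n : ℕ} {c : Fin (n + 1) → S1} {ρ : Perm (Fin (n + 1))}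
    (hc : InCyclicOrder c) (hcρ : InCyclicOrder (c ∘ ρ)) (hρ : ρ 0 = 0) : ρ = 1 := by
  have hmono : StrictMono ρ := by
    intro i j hij
    rcases (Fin.zero_le i).eq_or_lt with rfl | hi
    · rw [hρ]
      exact Fin.pos_of_ne_zero fun h => hij.ne (ρ.injective (hρ.trans h.symm))
    -- Seen from `c 0`, the points `c (ρ i)` and `c (ρ j)` come in the order given by `hcρ`.
    refine lt_of_le_of_ne (not_lt.1 fun hji => ?_) (ρ.injective.ne hij.ne)
    have hρj : 0 < ρ j :=
      Fin.pos_of_ne_zero fun h => (hi.trans hij).ne' (ρ.injective (h.trans hρ.symm))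
    have hij' := hcρ 0 i j hi hij
    simp only [Function.comp_apply, hρ] at hij'
    exact sbtw_asymm hij' (sbtw_cyclic_left (hc 0 _ _ hρj hji))
  ext i
  exact congrArg Fin.val hmono.apply_eq

theorem sign_eq_of_inCyclicOrder {k : ℕ} {b : Fin (2 * k + 1) → S1}
    {σ τ : Perm (Fin (2 * k + 1))} (hσ : InCyclicOrder (b ∘ σ))
    (hτ : InCyclicOrder (b ∘ τ)) : sign τ = sign σ := by
  -- `r` rotates the arrangement `b ∘ τ` so that it starts, like `b ∘ σ`, at `b (σ 0)`.
  set r := finRotate (2 * k + 1) ^ ((τ⁻¹ (σ 0) : Fin (2 * k + 1)) : ℕ)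
  have hr0 : r 0 = τ⁻¹ (σ 0) := finRotate_pow_val_apply_zero _
  have hρ : σ⁻¹ * (τ * r) = 1 := by
    refine eq_one_of_inCyclicOrder_comp hσ ?_ (by simp [hr0])
    convert hτ.comp_finRotate_pow (τ⁻¹ (σ 0) : ℕ) using 1
    ext i
    simp [r]
  have hr : sign r = 1 := by
    rw [map_pow, sign_finRotate, Nat.add_sub_cancel, (even_two_mul k).neg_one_pow, one_pow]
  rw [← mul_one (sign τ), ← hr, ← map_mul, eq_comm, ← inv_mul_eq_one.mp hρ]

theorem cycSgn_eq_sign {k : ℕ} {b : Fin (2 * k + 1) → S1} {σ : Perm (Fin (2 * k + 1))}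
    (hσ : InCyclicOrder (b ∘ σ)) : cycSgn b = sign σ := by
  have h : ∃ σ : Perm (Fin (2 * k + 1)), InCyclicOrder (b ∘ σ) := ⟨σ, hσ⟩
  rw [cycSgn, dif_pos h, sign_eq_of_inCyclicOrder hσ h.choose_spec]

theorem stmt6_general (φ : S1 → S1)
    (hφ : ∀ x y z : S1, sbtw x y z → sbtw (φ x) (φ y) (φ z))
    (k : ℕ) (a : Fin (2 * k + 1) → S1) (ha : Function.Injective a) :
    cycSgn (φ ∘ a) = cycSgn a := by
  obtain ⟨σ, hσ⟩ := exists_inCyclicOrder_comp_perm ha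
  have hφσ : InCyclicOrder ((φ ∘ a) ∘ σ) := fun i j l hij hjl =>
    hφ _ _ _ (hσ i j l hij hjl)
  rw [cycSgn_eq_sign hφσ, cycSgn_eq_sign hσ]

theorem stmt6 (φ : S1 → S1)
    (hφ : ∀ x y z : S1, sbtw x y z → sbtw (φ x) (φ y) (φ z))
    (k : ℕ) (a : Fin (2 * k + 1) → S1) (ha : Function.Injective a)
    (hφa : Function.Injective (φ ∘ a)) :
    cycSgn (φ ∘ a) = cycSgn a :=
  stmt6_general φ hφ k a ha
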